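/- Generalisation to networks with irreversible reactions (sufficiency, as stated in the paper's paragraph 'Generalisation to Non-Reversible Networks'): assume X is finite and let τ be a finite index type of irreversible reactions, with rate-constant variables kirr : τ → K and source/target exponent vectors μ' l, ν' l : X →₀ ℕ, such that all rate-constant variables kf j, kb j (j ∈ σ) and kirr l (l ∈ τ) are pairwise distinct. Define the monomial flux of the irreversible reaction l as g l := monomial (Finsupp.single (Sum.inl (kirr l)) 1 + Finsupp.mapDomain Sum.inr (μ' l)) 1, i.e. g l = (kirr l)·x^{μ' l}, and the steady-state polynomial of species x as q x := Σ_{j ∈ σ} ((μ j x : ℤ) − ν j x) • b j + Σ_{l ∈ τ} ((ν' l x : ℤ) − μ' l x) • g l. If there exists a set S ⊆ σ ⊕ τ such that the ℚ-linear span of the rows of the combined coefficient matrix (the vectors in ((σ ⊕ τ) → ℚ) whose σ-components are (μ j x − ν j x) and whose τ-components are (ν' l x − μ' l x), for x ∈ X) equals the ℚ-linear span of { Pi.single s 1 : s ∈ S }, then Ideal.span { q x : x ∈ X } = Ideal.span ({ b j : Sum.inl j ∈ S } ∪ { g l : Sum.inr l ∈ S }); in particular the steady state ideal is generated by polynomials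 each having at most two terms. -/

import Mathlib

/-!
Write the steady-state polynomials as `q x = ∑ s, r x s • h s`, where `h = Sum.elim b g` collects
the binomials and monomial fluxes. Then `q = L ∘ r` for the `ℚ`-linear map
`L v = ∑ s, v s • h s`, so the `ℚ`-span of the `q x` is the image under `L` of the row space.
By hypothesis that row space is spanned by the standard basis vectors `e_s`, `s ∈ S`, and
`L e_s = h s`. Since an ideal generated by a set is also generated by its `ℚ`-span, the two
ideals agree.
-/

open MvPolynomial

theorem Ideal.span_span_of_tower {k R : Type*} [CommSemiring k] [CommSemiring R] [Algebra k R]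
    (T : Set R) : Ideal.span (Submodule.span k T : Set R) = Ideal.span T :=
  Submodule.span_span_of_tower k R T

theorem Ideal.span_range_sum_smul_eq_span_image {k R ι X : Type*} [CommSemiring k]
    [CommSemiring R] [Algebra k R] [Fintype ι] [DecidableEq ι] (h : ι → R) (r : X → ι → k)
    (S : Set ι)
    (hS : Submodule.span k (Set.range r) =
      Submodule.span k ((fun s => Pi.single s (1 : k)) '' S)) :
    Ideal.span (Set.range fun x => ∑ s, r x s • h s) = Ideal.span (h '' S) := by
  set L := Fintype.linearCombination k h
  have hL : (fun x => ∑ s, r x s • h s) = L ∘ r :=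
    funext fun x => (Fintype.linearCombination_apply k h (r x)).symm
  have hL_single : L ∘ (fun s => Pi.single s (1 : k)) = h :=
    funext fun s => by simp [L, Fintype.linearCombination_apply_single]
  calc Ideal.span (Set.range fun x => ∑ s, r x s • h s)
      = Ideal.span (Submodule.span k (L '' Set.range r) : Set R) := by
        rw [hL, Set.range_comp, Ideal.span_span_of_tower]
    _ = Ideal.span (Submodule.span k (L '' ((fun s => Pi.single s (1 : k)) '' S)) : Set R) := by
        rw [Submodule.span_image, hS, ← Submodule.span_image]
    _ = Ideal.span (h '' S) := by
        rw [← Set.image_comp, hL_single, Ideal.span_span_of_tower]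

namespace MvPolynomial

variable {σ R : Type*} [CommSemiring R]

theorem card_support_monomial_le_one (d : σ →₀ ℕ) (a : R) : (monomial d a).support.card ≤ 1 :=
  (Finset.card_le_card support_monomial_subset).trans (Finset.card_singleton d).le

theorem card_support_monomial_add_monomial_le_two (d e : σ →₀ ℕ) (a c : R) :
    (monomial d a + monomial e c).support.card ≤ 2 := by
  classical
  calc (monomial d a + monomial e c).support.card
      ≤ ((monomial d a).support ∪ (monomial e c).support).card := Finset.card_le_card support_add
    _ ≤ 1 + 1 := (Finset.card_union_le _ _).trans
        (add_le_add (card_support_monomial_le_one d a) (card_support_monomial_le_one e c))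

end MvPolynomial

theorem steady_state_ideal_of_mixed_network_general
    {K X σ τ : Type*} [Fintype σ] [Fintype τ] [Fintype X] [DecidableEq σ] [DecidableEq τ]
    (kf kb : σ → K) (kirr : τ → K)
    (μ ν : σ → (X →₀ ℕ)) (μ' ν' : τ → (X →₀ ℕ))
    (b : σ → MvPolynomial (K ⊕ X) ℚ)
    (hb : ∀ j, b j =
      MvPolynomial.monomial
        (Finsupp.single (Sum.inl (kf j)) 1 + Finsupp.mapDomain Sum.inr (μ j)) (-1 : ℚ) +
      MvPolynomial.monomial
        (Finsupp.single (Sum.inl (kb j)) 1 + Finsupp.mapDomain Sum.inr (ν j)) (1 : ℚ))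
    (g : τ → MvPolynomial (K ⊕ X) ℚ)
    (hg : ∀ l, g l =
      MvPolynomial.monomial
        (Finsupp.single (Sum.inl (kirr l)) 1 + Finsupp.mapDomain Sum.inr (μ' l)) (1 : ℚ))
    (q : X → MvPolynomial (K ⊕ X) ℚ)
    (hq : ∀ x, q x =
      ∑ j : σ, ((μ j x : ℤ) - (ν j x : ℤ)) • b j +
      ∑ l : τ, ((ν' l x : ℤ) - (μ' l x : ℤ)) • g l)
    (r : X → (σ ⊕ τ) → ℚ)
    (hr : ∀ x, r x = Sum.elim
      (fun j => (μ j x : ℚ) - (ν j x : ℚ))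
      (fun l => (ν' l x : ℚ) - (μ' l x : ℚ)))
    (S : Set (σ ⊕ τ))
    (hS : Submodule.span ℚ (Set.range r) =
      Submodule.span ℚ ((fun s => Pi.single s (1 : ℚ)) '' S)) :
    Ideal.span (Set.range q) =
      Ideal.span ((b '' {j | Sum.inl j ∈ S}) ∪ (g '' {l | Sum.inr l ∈ S})) ∧
      ∃ B : Set (MvPolynomial (K ⊕ X) ℚ),
        (∀ f ∈ B, f.support.card ≤ 2) ∧
        Ideal.span (Set.range q) = Ideal.span B := by
  have hq_rows : q = fun x => ∑ s, r x s • Sum.elim b g s := by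
    funext x
    simp only [hq, hr, Fintype.sum_sum_type, Sum.elim_inl, Sum.elim_inr,
      ← Int.cast_smul_eq_zsmul ℚ, Int.cast_sub, Int.cast_natCast]
  have hspan : Ideal.span (Set.range q) =
      Ideal.span ((b '' {j | Sum.inl j ∈ S}) ∪ (g '' {l | Sum.inr l ∈ S})) := by
    rw [hq_rows, Ideal.span_range_sum_smul_eq_span_image _ r S hS, Set.image_sumElim]
    rfl
  refine ⟨hspan, _, ?_, hspan⟩
  rintro f (⟨j, -, rfl⟩ | ⟨l, -, rfl⟩)
  · rw [hb]
    exact card_support_monomial_add_monomial_le_two _ _ _ _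
  · rw [hg]
    exact (card_support_monomial_le_one _ _).trans one_le_two

/-- generalisation to networks with irreversible reactions,
sufficiency: if the row space of the combined coefficient matrix of a network
with reversible reactions (binomials `b j`) and irreversible reactions
(monomial fluxes `g l`) is the span of a set of standard basis vectors indexed
by `S ⊆ σ ⊕ τ`, then the steady state ideal is generated by the corresponding
binomials and monomials; in particular it is generated by polynomials having
at most two terms each. -/
theorem steady_state_ideal_of_mixed_network
    {K X σ τ : Type*} [Fintype σ] [Fintype τ] [Fintype X] [DecidableEq σ] [DecidableEq τ]
    (kf kb : σ → K) (kirr : τ → K)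
    (μ ν : σ → (X →₀ ℕ)) (μ' ν' : τ → (X →₀ ℕ))
    (hinj : Function.Injective (Sum.elim kf (Sum.elim kb kirr) : σ ⊕ (σ ⊕ τ) → K))
    (b : σ → MvPolynomial (K ⊕ X) ℚ)
    (hb : ∀ j, b j =
      MvPolynomial.monomial
        (Finsupp.single (Sum.inl (kf j)) 1 + Finsupp.mapDomain Sum.inr (μ j)) (-1 : ℚ) +
      MvPolynomial.monomial
        (Finsupp.single (Sum.inl (kb j)) 1 + Finsupp.mapDomain Sum.inr (ν j)) (1 : ℚ))
    (g : τ → MvPolynomial (K ⊕ X) ℚ)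
    (hg : ∀ l, g l =
      MvPolynomial.monomial
        (Finsupp.single (Sum.inl (kirr l)) 1 + Finsupp.mapDomain Sum.inr (μ' l)) (1 : ℚ))
    (q : X → MvPolynomial (K ⊕ X) ℚ)
    (hq : ∀ x, q x =
      ∑ j : σ, ((μ j x : ℤ) - (ν j x : ℤ)) • b j +
      ∑ l : τ, ((ν' l x : ℤ) - (μ' l x : ℤ)) • g l)
    (r : X → (σ ⊕ τ) → ℚ)
    (hr : ∀ x, r x = Sum.elim
      (fun j => (μ j x : ℚ) - (ν j x : ℚ))
      (fun l => (ν' l x : ℚ) - (μ' l x : ℚ)))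
    (S : Set (σ ⊕ τ))
    (hS : Submodule.span ℚ (Set.range r) =
      Submodule.span ℚ ((fun s => Pi.single s (1 : ℚ)) '' S)) :
    Ideal.span (Set.range q) =
      Ideal.span ((b '' {j | Sum.inl j ∈ S}) ∪ (g '' {l | Sum.inr l ∈ S})) ∧
      ∃ B : Set (MvPolynomial (K ⊕ X) ℚ),
        (∀ f ∈ B, f.support.card ≤ 2) ∧
        Ideal.span (Set.range q) = Ideal.span B :=
  steady_state_ideal_of_mixed_network_general kf kb kirr μ ν μ' ν' b hb g hg q hq r hr S hS
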